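/- arXiv:1904.02974 — 2 statements merged into one kernel-verified Lean document; each statement's English description precedes it below -/
import Mathlib

section
/- Let a ∈ ℂ \ {0}, let h(z) = 1 + az ∈ A², and let M = [h]_{M_{z²}} be the smallest closed subspace of the Bergman space A² that contains h and is invariant under multiplication by z². Then h is orthogonal in A² to the closure of z²M, and consequently M = [M ⊖ z²M]_{M_{z²}}. -/
open MeasureTheory

/-- The measure on `ℕ` giving the singleton `{n}` mass `(n+1)^α`. -/
noncomputable def dirichletMeasure (α : ℝ) : Measure ℕ :=
  Measure.count.withDensity (fun n => ENNReal.ofReal ((n + 1 : ℝ) ^ α))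

attribute [irreducible] dirichletMeasure

/-- The Dirichlet-type space `D_α`, realized as the weighted `ℓ²` space of Taylor
coefficients: `‖f‖_α² = ∑ |a_n|² (n+1)^α`.  `α = -1` is the Bergman space `A²`,
`α = 0` is the Hardy space `H²`. -/
noncomputable abbrev Dspace (α : ℝ) : Type := Lp ℂ 2 (dirichletMeasure α)

/-- `T` acts on `D_α` as multiplication by `z^k`, i.e. as the `k`-step coefficient shift. -/
def IsShiftBy (α : ℝ) (k : ℕ) (T : Dspace α →L[ℂ] Dspace α) : Prop :=
  ∀ f : Dspace α, ∀ n : ℕ, (T f : ℕ → ℂ) n = if k ≤ n then (f : ℕ → ℂ) (n - k) else 0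

/-- `[E]_T`: the smallest closed `T`-invariant subspace containing the set `E`. -/
def invGen {H : Type*} [NormedAddCommGroup H] [InnerProductSpace ℂ H]
    (T : H →L[ℂ] H) (E : Set H) : Submodule ℂ H :=
  sInf {N : Submodule ℂ H | IsClosed (N : Set H) ∧ (∀ x ∈ N, T x ∈ N) ∧ E ⊆ N}

/-- `M ⊖ TM`: the orthogonal complement in `M` of (the closure of) `T M`. -/
noncomputable def wanderingPart {H : Type*} [NormedAddCommGroup H] [InnerProductSpace ℂ H]
    (T : H →L[ℂ] H) (M : Submodule ℂ H) : Submodule ℂ H :=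
  M ⊓ (Submodule.map (↑T : H →ₗ[ℂ] H) M)ᗮ

/-!
Multiplication by `z²` raises the order of vanishing at `0` to at least two, so in the
coefficient picture `z²M` is supported on `{2, 3, …}` while `1 + az` is supported on `{0, 1}`;
disjointly supported coefficient sequences are orthogonal. Once the generator `h` lies in
`M ⊖ z²M`, the closed invariant subspace generated by `M ⊖ z²M` is squeezed between
`[h]` and `M = [h]`.
-/

section invGen

variable {H : Type*} [NormedAddCommGroup H] [InnerProductSpace ℂ H] (T : H →L[ℂ] H)

lemma isClosed_invGen (E : Set H) : IsClosed (invGen T E : Set H) := by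
  rw [invGen, Submodule.coe_sInf]
  exact isClosed_biInter fun _ hN => hN.1

lemma apply_mem_invGen {E : Set H} {x : H} (hx : x ∈ invGen T E) : T x ∈ invGen T E := by
  rw [invGen, Submodule.mem_sInf] at hx ⊢
  exact fun N hN => hN.2.1 x (hx N hN)

lemma subset_invGen (E : Set H) : E ⊆ invGen T E := fun _ hx => by
  simp only [invGen, SetLike.mem_coe, Submodule.mem_sInf]
  exact fun _ hN => hN.2.2 hx

lemma invGen_le {E : Set H} {N : Submodule ℂ H} (hc : IsClosed (N : Set H))
    (hi : ∀ x ∈ N, T x ∈ N) (hs : E ⊆ N) : invGen T E ≤ N :=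
  sInf_le ⟨hc, hi, hs⟩

lemma invGen_mono {E F : Set H} (hEF : E ⊆ F) : invGen T E ≤ invGen T F :=
  invGen_le T (isClosed_invGen T F) (fun _ => apply_mem_invGen T) (hEF.trans (subset_invGen T F))

lemma invGen_wanderingPart_le (M : Submodule ℂ H) (hc : IsClosed (M : Set H))
    (hi : ∀ x ∈ M, T x ∈ M) : invGen T (wanderingPart T M) ≤ M :=
  invGen_le T hc hi fun _ hx => hx.1

theorem invGen_eq_invGen_wanderingPart {E : Set H}
    (hE : E ⊆ (Submodule.map (T : H →ₗ[ℂ] H) (invGen T E))ᗮ) :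
    invGen T E = invGen T (wanderingPart T (invGen T E)) := by
  refine le_antisymm (invGen_mono T fun x hx => ⟨subset_invGen T E hx, hE hx⟩) ?_
  exact invGen_wanderingPart_le T _ (isClosed_invGen T E) fun _ => apply_mem_invGen T

end invGen

section Dspace

variable {α : ℝ}

lemma Dspace.inner_eq_zero_of_coeff_mul_eq_zero {f g : Dspace α}
    (hfg : ∀ n, (f : ℕ → ℂ) n * (g : ℕ → ℂ) n = 0) : inner ℂ f g = 0 := by
  have hpointwise : ∀ n, inner ℂ ((f : ℕ → ℂ) n) ((g : ℕ → ℂ) n) = 0 := fun n => by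
    rcases mul_eq_zero.mp (hfg n) with h0 | h0 <;> simp [h0]
  rw [L2.inner_def, integral_congr_ae (Filter.Eventually.of_forall hpointwise), integral_zero]

lemma IsShiftBy.inner_apply_eq_zero {k : ℕ} {T : Dspace α →L[ℂ] Dspace α}
    (hT : IsShiftBy α k T) {h : Dspace α} (hh : ∀ n, k ≤ n → (h : ℕ → ℂ) n = 0)
    (f : Dspace α) : inner ℂ (T f) h = 0 :=
  Dspace.inner_eq_zero_of_coeff_mul_eq_zero fun n => by
    rw [hT f n]
    split_ifs with hkn
    · rw [hh n hkn, mul_zero]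
    · rw [zero_mul]

lemma IsShiftBy.mem_orthogonal_map {k : ℕ} {T : Dspace α →L[ℂ] Dspace α}
    (hT : IsShiftBy α k T) {h : Dspace α} (hh : ∀ n, k ≤ n → (h : ℕ → ℂ) n = 0)
    (M : Submodule ℂ (Dspace α)) :
    h ∈ (Submodule.map (T : Dspace α →ₗ[ℂ] Dspace α) M)ᗮ := by
  rw [Submodule.mem_orthogonal]
  rintro _ ⟨f, -, rfl⟩
  exact hT.inner_apply_eq_zero hh f

end Dspace

theorem generated_by_one_plus_az_is_wandering_generated_general
    (a : ℂ) (h : Dspace (-1))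
    (hcoeff : ∀ n : ℕ, (h : ℕ → ℂ) n = if n = 0 then 1 else if n = 1 then a else 0)
    (T2 : Dspace (-1) →L[ℂ] Dspace (-1)) (hT2 : IsShiftBy (-1) 2 T2)
    (M : Submodule ℂ (Dspace (-1))) (hM : M = invGen T2 {h}) :
    h ∈ (Submodule.map (↑T2 : Dspace (-1) →ₗ[ℂ] Dspace (-1)) M)ᗮ ∧
      M = invGen T2 ↑(wanderingPart T2 M) := by
  have hdeg : ∀ n, 2 ≤ n → (h : ℕ → ℂ) n = 0 := fun n hn => by
    rw [hcoeff n, if_neg (by omega), if_neg (by omega)]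
  have horth := hT2.mem_orthogonal_map hdeg M
  refine ⟨horth, ?_⟩
  subst hM
  exact invGen_eq_invGen_wanderingPart T2 (Set.singleton_subset_iff.mpr horth)

/-- For `a ≠ 0`, `h(z) = 1 + az ∈ A²`, and `M = [h]_{M_{z²}}` the smallest closed
`z²`-invariant subspace containing `h`, the function `h` is orthogonal to (the closure
of) `z²M`, and consequently `M = [M ⊖ z²M]_{M_{z²}}`. -/
theorem generated_by_one_plus_az_is_wandering_generated
    (a : ℂ) (ha : a ≠ 0) (h : Dspace (-1))
    (hcoeff : ∀ n : ℕ, (h : ℕ → ℂ) n = if n = 0 then 1 else if n = 1 then a else 0)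
    (T2 : Dspace (-1) →L[ℂ] Dspace (-1)) (hT2 : IsShiftBy (-1) 2 T2)
    (M : Submodule ℂ (Dspace (-1))) (hM : M = invGen T2 {h}) :
    h ∈ (Submodule.map (↑T2 : Dspace (-1) →ₗ[ℂ] Dspace (-1)) M)ᗮ ∧
      M = invGen T2 ↑(wanderingPart T2 M) :=
  generated_by_one_plus_az_is_wandering_generated_general a h hcoeff T2 hT2 M hM
end

section
/- Let B be a finite Blaschke product and let α ∈ ℝ. Then B is a multiplier of D_α: for every f ∈ D_α the product Bf belongs to D_α, and the multiplication operator M_B : f ↦ Bf is bounded on D_α. -/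
/-! Multiplication by `z ^ k` is the `k`-step coefficient shift `S_k`, and since
`(n + k + 1) ^ α ≤ (k + 1) ^ |α| * (n + 1) ^ α` it has norm at most `(k + 1) ^ (|α| / 2)` on `D_α`.
Hence a power series `∑ b_k z ^ k` with `∑ |b_k| (k + 1) ^ (|α| / 2) < ∞` acts on `D_α` through the
norm-convergent operator `∑ b_k S_k`; since `|f_n| ≤ (n + 1) ^ (-α / 2) * ‖f‖`, the Taylor series
of every `f ∈ D_α` converges absolutely on the disc, and the Cauchy product identifies that operator
with multiplication by the sum of the series. The Taylor coefficients `-a, conj a ^ (k - 1) * (1 - |a| ^ 2)` of a Blaschke factor decay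
geometrically, and multipliers are closed under products and constants. -/

open MeasureTheory

/-- The analytic function attached to a coefficient sequence: `z ↦ ∑ aₙ zⁿ`. -/
noncomputable def seriesFn (a : ℕ → ℂ) (z : ℂ) : ℂ := ∑' n, a n * z ^ n

/-- `B` is a finite Blaschke product:
`B(z) = e^{iθ} ∏_{i=1}^N (z - αᵢ)/(1 - conj(αᵢ) z)` with `N ≥ 1` and `αᵢ ∈ 𝔻`. -/
def IsFiniteBlaschke (B : ℂ → ℂ) : Prop :=
  ∃ (θ : ℝ) (N : ℕ) (a : Fin N → ℂ), 0 < N ∧ (∀ i, a i ∈ Metric.ball (0 : ℂ) 1) ∧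
    ∀ z : ℂ, B z = Complex.exp (θ * Complex.I) *
      ∏ i, (z - a i) / (1 - (starRingEnd ℂ) (a i) * z)

/-- `T` acts on `D_α` as multiplication by the function `B`. -/
def IsMultiplicationBy (α : ℝ) (B : ℂ → ℂ) (T : Dspace α →L[ℂ] Dspace α) : Prop :=
  ∀ f : Dspace α, ∀ z ∈ Metric.ball (0 : ℂ) 1,
    seriesFn (T f) z = B z * seriesFn f z

open scoped ENNReal

lemma rpow_add_add_one_le {x y : ℝ} (hx : 0 ≤ x) (hy : 0 ≤ y) (α : ℝ) :
    (x + y + 1) ^ α ≤ (y + 1) ^ |α| * (x + 1) ^ α := by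
  rcases le_or_gt 0 α with hα | hα
  · rw [abs_of_nonneg hα, ← Real.mul_rpow (by positivity) (by positivity)]
    exact Real.rpow_le_rpow (by positivity) (by nlinarith) hα
  · calc (x + y + 1) ^ α ≤ (x + 1) ^ α :=
          Real.rpow_le_rpow_of_nonpos (by positivity) (by linarith) hα.le
      _ ≤ (y + 1) ^ |α| * (x + 1) ^ α :=
        le_mul_of_one_le_left (by positivity) (Real.one_le_rpow (by linarith) (abs_nonneg α))

lemma summable_add_rpow_mul_geometric {c : ℝ} (hc : 0 ≤ c) (s : ℝ) {r : ℝ} (hr₀ : 0 ≤ r)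
    (hr₁ : r < 1) : Summable fun n : ℕ => ((n : ℝ) + c) ^ s * r ^ n := by
  have hO : (fun n : ℕ => ((n : ℝ) + c) ^ s) =O[Filter.atTop] fun n => ((n ^ ⌈s⌉₊ : ℕ) : ℝ) := by
    refine Asymptotics.IsBigO.of_bound ((1 + c) ^ ⌈s⌉₊) ?_
    filter_upwards [Filter.eventually_ge_atTop 1] with n hn₁
    have hn : (1 : ℝ) ≤ n := by exact_mod_cast hn₁
    have hnc : 0 ≤ (n : ℝ) + c := by positivity
    rw [Real.norm_of_nonneg (Real.rpow_nonneg hnc s), Nat.cast_pow,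
      Real.norm_of_nonneg (by positivity), ← mul_pow]
    calc ((n : ℝ) + c) ^ s ≤ ((n : ℝ) + c) ^ (⌈s⌉₊ : ℝ) :=
          Real.rpow_le_rpow_of_exponent_le (by linarith : (1 : ℝ) ≤ n + c) (Nat.le_ceil s)
      _ ≤ ((1 + c) * n) ^ ⌈s⌉₊ := by
          rw [Real.rpow_natCast]
          gcongr
          nlinarith [mul_le_mul_of_nonneg_left hn hc]
  refine (summable_norm_mul_geometric_of_norm_lt_one' (by rwa [Real.norm_of_nonneg hr₀]) hO).congr
    fun n => ?_
  rw [Real.norm_of_nonneg (by positivity)]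

noncomputable def dirichletWeight (α : ℝ) (n : ℕ) : ℝ≥0∞ := ENNReal.ofReal ((n + 1 : ℝ) ^ α)

lemma lintegral_dirichletMeasure (α : ℝ) (g : ℕ → ℝ≥0∞) :
    ∫⁻ n, g n ∂dirichletMeasure α = ∑' n, g n * dirichletWeight α n := by
  rw [dirichletMeasure, lintegral_withDensity_eq_lintegral_mul _ (by fun_prop) (by fun_prop),
    lintegral_count]
  simp only [Pi.mul_apply, mul_comm, dirichletWeight]

lemma eq_of_ae_eq_dirichletMeasure {β : Type*} {α : ℝ} {f g : ℕ → β}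
    (h : f =ᵐ[dirichletMeasure α] g) : f = g := by
  refine funext fun n => ae_iff_of_countable.mp h n ?_
  rw [dirichletMeasure, withDensity_apply _ (measurableSet_singleton n), lintegral_singleton,
    Measure.count_singleton, mul_one]
  positivity

lemma eLpNorm_two_dirichletMeasure {E : Type*} [NormedAddCommGroup E] (α : ℝ) (f : ℕ → E) :
    eLpNorm f 2 (dirichletMeasure α) = (∑' n, ‖f n‖ₑ ^ 2 * dirichletWeight α n) ^ (1 / 2 : ℝ) := by
  rw [eLpNorm_eq_lintegral_rpow_enorm_toReal (by norm_num) (by norm_num),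
    lintegral_dirichletMeasure]
  norm_num

lemma dirichletWeight_add_le (α : ℝ) (m k : ℕ) :
    dirichletWeight α (m + k) ≤ ENNReal.ofReal ((k + 1 : ℝ) ^ |α|) * dirichletWeight α m := by
  rw [dirichletWeight, dirichletWeight, ← ENNReal.ofReal_mul (by positivity), Nat.cast_add]
  exact ENNReal.ofReal_le_ofReal (rpow_add_add_one_le m.cast_nonneg k.cast_nonneg α)

def shiftCoeff (k : ℕ) (f : ℕ → ℂ) (n : ℕ) : ℂ := if k ≤ n then f (n - k) else 0

lemma tsum_shiftCoeff (k : ℕ) (f : ℕ → ℂ) (g : ℕ → ℝ≥0∞) :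
    ∑' n, ‖shiftCoeff k f n‖ₑ ^ 2 * g n = ∑' m, ‖f m‖ₑ ^ 2 * g (m + k) := by
  rw [← (add_left_injective k).tsum_eq]
  · simp [shiftCoeff]
  · intro n hn
    by_cases hkn : k ≤ n
    · exact ⟨n - k, Nat.sub_add_cancel hkn⟩
    · simp [shiftCoeff, hkn] at hn

lemma eLpNorm_shiftCoeff_le (α : ℝ) (k : ℕ) (f : ℕ → ℂ) :
    eLpNorm (shiftCoeff k f) 2 (dirichletMeasure α) ≤
      ENNReal.ofReal ((k + 1 : ℝ) ^ (|α| / 2)) * eLpNorm f 2 (dirichletMeasure α) := by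
  have hsq : ∑' n, ‖shiftCoeff k f n‖ₑ ^ 2 * dirichletWeight α n ≤
      ENNReal.ofReal ((k + 1 : ℝ) ^ |α|) * ∑' m, ‖f m‖ₑ ^ 2 * dirichletWeight α m := by
    rw [tsum_shiftCoeff, ← ENNReal.tsum_mul_left]
    refine ENNReal.tsum_le_tsum fun m => ?_
    rw [mul_left_comm]
    gcongr
    exact dirichletWeight_add_le α m k
  have hroot : ENNReal.ofReal ((k + 1 : ℝ) ^ |α|) ^ (1 / 2 : ℝ) =
      ENNReal.ofReal ((k + 1 : ℝ) ^ (|α| / 2)) := by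
    rw [ENNReal.ofReal_rpow_of_nonneg (by positivity) (by norm_num),
      ← Real.rpow_mul (by positivity)]
    ring_nf
  rw [eLpNorm_two_dirichletMeasure, eLpNorm_two_dirichletMeasure, ← hroot,
    ← ENNReal.mul_rpow_of_nonneg _ _ (by norm_num)]
  exact ENNReal.rpow_le_rpow hsq (by norm_num)

lemma enorm_mul_dirichletWeight_le {E : Type*} [NormedAddCommGroup E] (α : ℝ) (f : ℕ → E)
    (n : ℕ) :
    ‖f n‖ₑ * dirichletWeight α n ^ (1 / 2 : ℝ) ≤ eLpNorm f 2 (dirichletMeasure α) := by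
  rw [eLpNorm_two_dirichletMeasure]
  calc ‖f n‖ₑ * dirichletWeight α n ^ (1 / 2 : ℝ)
      = (‖f n‖ₑ ^ 2 * dirichletWeight α n) ^ (1 / 2 : ℝ) := by
        rw [ENNReal.mul_rpow_of_nonneg _ _ (by norm_num), ← ENNReal.rpow_natCast,
          ← ENNReal.rpow_mul]
        norm_num
    _ ≤ _ := ENNReal.rpow_le_rpow (ENNReal.le_tsum n) (by norm_num)

namespace Dspace

variable {α : ℝ}

lemma ext {f g : Dspace α} (h : ⇑f = ⇑g) : f = g :=
  Lp.ext (h ▸ Filter.EventuallyEq.rfl)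

lemma coeFn_add (f g : Dspace α) : ⇑(f + g) = ⇑f + ⇑g :=
  eq_of_ae_eq_dirichletMeasure (Lp.coeFn_add f g)

lemma coeFn_smul (c : ℂ) (f : Dspace α) : ⇑(c • f) = c • ⇑f :=
  eq_of_ae_eq_dirichletMeasure (Lp.coeFn_smul c f)

lemma coeFn_toLp {F : ℕ → ℂ} (hF : MemLp F 2 (dirichletMeasure α)) :
    ⇑(hF.toLp F : Dspace α) = F :=
  eq_of_ae_eq_dirichletMeasure hF.coeFn_toLp

lemma memLp_shiftCoeff (k : ℕ) (f : Dspace α) : MemLp (shiftCoeff k f) 2 (dirichletMeasure α) :=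
  ⟨(measurable_from_top (f := shiftCoeff k f)).aestronglyMeasurable,
    (eLpNorm_shiftCoeff_le α k f).trans_lt
      (ENNReal.mul_lt_top ENNReal.ofReal_lt_top (Lp.eLpNorm_lt_top f))⟩

noncomputable def shift (α : ℝ) (k : ℕ) : Dspace α →L[ℂ] Dspace α :=
  LinearMap.mkContinuous
    { toFun f := (memLp_shiftCoeff k f).toLp _
      map_add' f g := by
        refine ext ?_
        simp only [coeFn_add, coeFn_toLp]
        funext n
        simp only [shiftCoeff, Pi.add_apply]
        split_ifs <;> simp
      map_smul' c f := by
        refine ext ?_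
        simp only [coeFn_smul, coeFn_toLp, RingHom.id_apply]
        funext n
        simp only [shiftCoeff, Pi.smul_apply]
        split_ifs <;> simp }
    ((k + 1 : ℝ) ^ (|α| / 2))
    fun f => by
      simp only [LinearMap.coe_mk, AddHom.coe_mk, Lp.norm_def, coeFn_toLp]
      rw [← ENNReal.toReal_ofReal (by positivity : (0 : ℝ) ≤ (k + 1 : ℝ) ^ (|α| / 2)),
        ← ENNReal.toReal_mul]
      exact ENNReal.toReal_mono (ENNReal.mul_ne_top ENNReal.ofReal_ne_top (Lp.eLpNorm_ne_top f))
        (eLpNorm_shiftCoeff_le α k f)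

lemma isShiftBy_shift (α : ℝ) (k : ℕ) : IsShiftBy α k (shift α k) :=
  fun f n => congrFun (coeFn_toLp (memLp_shiftCoeff k f)) n

lemma norm_shift_le (α : ℝ) (k : ℕ) : ‖shift α k‖ ≤ (k + 1 : ℝ) ^ (|α| / 2) :=
  LinearMap.mkContinuous_norm_le _ (by positivity) _

lemma norm_apply_le (f : Dspace α) (n : ℕ) : ‖f n‖ ≤ (n + 1 : ℝ) ^ (-α / 2) * ‖f‖ := by
  have h := ENNReal.toReal_mono (Lp.eLpNorm_ne_top f) (enorm_mul_dirichletWeight_le α f n)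
  rw [ENNReal.toReal_mul, ← ENNReal.toReal_rpow, dirichletWeight,
    ENNReal.toReal_ofReal (by positivity),
    ← Real.rpow_mul (by positivity), toReal_enorm, ← Lp.norm_def] at h
  rw [neg_div, Real.rpow_neg (by positivity), ← div_eq_inv_mul, le_div_iff₀ (by positivity)]
  rwa [← div_eq_mul_one_div] at h

noncomputable def coeff (α : ℝ) (n : ℕ) : Dspace α →L[ℂ] ℂ :=
  LinearMap.mkContinuous
    { toFun f := f n
      map_add' f g := by rw [coeFn_add]; rfl
      map_smul' c f := by rw [coeFn_smul]; rfl }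
    ((n + 1 : ℝ) ^ (-α / 2)) (norm_apply_le · n)

lemma coeff_apply (n : ℕ) (f : Dspace α) : coeff α n f = f n := rfl

lemma summable_norm_mul_pow (f : Dspace α) {z : ℂ} (hz : ‖z‖ < 1) :
    Summable fun n => ‖f n * z ^ n‖ := by
  refine .of_nonneg_of_le (fun n => norm_nonneg _) (fun n => ?_)
    ((summable_add_rpow_mul_geometric zero_le_one (-α / 2) (norm_nonneg z) hz).mul_right ‖f‖)
  rw [norm_mul, norm_pow, mul_right_comm]
  exact mul_le_mul_of_nonneg_right (norm_apply_le f n) (by positivity)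

lemma summable_smul_shift {b : ℕ → ℂ} (hb : Summable fun k => ‖b k‖ * (k + 1 : ℝ) ^ (|α| / 2)) :
    Summable fun k => b k • shift α k :=
  .of_norm <| .of_nonneg_of_le (fun _ => norm_nonneg _)
    (fun k => (norm_smul_le _ _).trans
      (mul_le_mul_of_nonneg_left (norm_shift_le α k) (norm_nonneg _)))
    hb

lemma tsum_smul_shift_apply {b : ℕ → ℂ}
    (hb : Summable fun k => ‖b k‖ * (k + 1 : ℝ) ^ (|α| / 2)) (f : Dspace α) (n : ℕ) :
    (∑' k, b k • shift α k) f n = ∑ k ∈ Finset.range (n + 1), b k * f (n - k) := by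
  have hterm (k : ℕ) : (coeff α n ∘L .apply ℂ _ f) (b k • shift α k) =
      if k ≤ n then b k * f (n - k) else 0 := by
    simp only [ContinuousLinearMap.comp_apply, ContinuousLinearMap.apply_apply,
      FunLike.coe_smul, Pi.smul_apply, coeff_apply, coeFn_smul, isShiftBy_shift α k f n]
    split_ifs <;> simp
  change (coeff α n ∘L .apply ℂ _ f) (∑' k, b k • shift α k) = _
  rw [ContinuousLinearMap.map_tsum _ (summable_smul_shift hb), tsum_congr hterm,
    tsum_eq_sum (s := Finset.range (n + 1)) fun _ hk => if_neg (by simpa using hk)]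
  exact Finset.sum_congr rfl fun k hk => if_pos (Nat.lt_succ_iff.mp (Finset.mem_range.mp hk))

end Dspace

open Dspace ComplexConjugate

def multipliers (α : ℝ) : Submonoid (ℂ → ℂ) where
  carrier := {B | ∃ T, IsMultiplicationBy α B T}
  one_mem' := ⟨1, fun f z _ => by simp⟩
  mul_mem' := by
    rintro B₁ B₂ ⟨T₁, h₁⟩ ⟨T₂, h₂⟩
    refine ⟨T₁ * T₂, fun f z hz => ?_⟩
    change seriesFn (T₁ (T₂ f)) z = _
    rw [h₁ _ z hz, h₂ f z hz, Pi.mul_apply, mul_assoc]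

lemma const_mem_multipliers (α : ℝ) (c : ℂ) : (fun _ => c) ∈ multipliers α :=
  ⟨c • 1, fun f z _ => by simp [seriesFn, coeFn_smul, mul_assoc, tsum_mul_left]⟩

theorem mem_multipliers_of_hasSum {α : ℝ} {b : ℕ → ℂ} {g : ℂ → ℂ}
    (hb : Summable fun k => ‖b k‖ * (k + 1 : ℝ) ^ (|α| / 2))
    (hg : ∀ z ∈ Metric.ball (0 : ℂ) 1, HasSum (fun k => b k * z ^ k) (g z)) :
    g ∈ multipliers α := by
  refine ⟨∑' k, b k • shift α k, fun f z hz => ?_⟩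
  have hz' : ‖z‖ < 1 := mem_ball_zero_iff.mp hz
  have hbz : Summable fun k => ‖b k * z ^ k‖ := by
    refine .of_nonneg_of_le (fun k => norm_nonneg _) (fun k => ?_) hb
    rw [norm_mul, norm_pow]
    refine mul_le_mul_of_nonneg_left ?_ (norm_nonneg _)
    exact (pow_le_one₀ (norm_nonneg z) hz'.le).trans (Real.one_le_rpow (by simp) (by positivity))
  rw [← (hg z hz).tsum_eq, seriesFn, seriesFn,
    tsum_mul_tsum_eq_tsum_sum_range_of_summable_norm hbz (summable_norm_mul_pow f hz')]
  refine tsum_congr fun n => ?_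
  rw [tsum_smul_shift_apply hb, Finset.sum_mul]
  refine Finset.sum_congr rfl fun k hk => ?_
  rw [mul_mul_mul_comm, ← pow_add,
    Nat.add_sub_cancel' (Nat.lt_succ_iff.mp (Finset.mem_range.mp hk))]

def blaschkeFactorCoeff (a : ℂ) : ℕ → ℂ
  | 0 => -a
  | k + 1 => conj a ^ k * (1 - conj a * a)

lemma norm_blaschkeFactorCoeff_succ_le {a : ℂ} (ha : ‖a‖ ≤ 1) (k : ℕ) :
    ‖blaschkeFactorCoeff a (k + 1)‖ ≤ ‖a‖ ^ k := by
  have h : ‖1 - conj a * a‖ ≤ 1 := by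
    rw [Complex.conj_mul', ← Complex.ofReal_pow, ← Complex.ofReal_one, ← Complex.ofReal_sub,
      Complex.norm_real, Real.norm_of_nonneg (by nlinarith [norm_nonneg a])]
    nlinarith [norm_nonneg a]
  rw [blaschkeFactorCoeff, norm_mul, norm_pow, Complex.norm_conj]
  exact mul_le_of_le_one_right (by positivity) h

lemma summable_blaschkeFactorCoeff {a : ℂ} (ha : ‖a‖ < 1) (s : ℝ) :
    Summable fun k => ‖blaschkeFactorCoeff a k‖ * (k + 1 : ℝ) ^ s := by
  refine (summable_nat_add_iff 1).mp <| .of_nonneg_of_le (fun k => by positivity) (fun k => ?_)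
    (summable_add_rpow_mul_geometric zero_le_two s (norm_nonneg a) ha)
  rw [mul_comm, Nat.cast_add_one, add_assoc, one_add_one_eq_two]
  exact mul_le_mul_of_nonneg_left (norm_blaschkeFactorCoeff_succ_le ha.le k) (by positivity)

lemma hasSum_blaschkeFactorCoeff {a z : ℂ} (ha : ‖a‖ < 1) (hz : ‖z‖ < 1) :
    HasSum (fun k => blaschkeFactorCoeff a k * z ^ k) ((z - a) / (1 - conj a * z)) := by
  have haz : ‖conj a * z‖ < 1 := by
    rw [norm_mul, Complex.norm_conj]
    nlinarith [norm_nonneg a, norm_nonneg z]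
  have hne : 1 - conj a * z ≠ 0 := sub_ne_zero.mpr fun h => by simp [← h] at haz
  have hterms : (fun k => blaschkeFactorCoeff a (k + 1) * z ^ (k + 1)) =
      fun k => (1 - conj a * a) * z * (conj a * z) ^ k := by
    funext k
    simp only [blaschkeFactorCoeff]
    ring
  have hrest : (z - a) / (1 - conj a * z) - ∑ i ∈ Finset.range 1, blaschkeFactorCoeff a i * z ^ i =
      (1 - conj a * a) * z * (1 - conj a * z)⁻¹ := by
    rw [eq_mul_inv_iff_mul_eq₀ hne, sub_mul, div_mul_cancel₀ _ hne]
    simp only [Finset.range_one, Finset.sum_singleton, blaschkeFactorCoeff, pow_zero, mul_one]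
    ring
  rw [← hasSum_nat_add_iff' 1, hterms, hrest]
  exact (hasSum_geometric_of_norm_lt_one haz).mul_left _

lemma blaschkeFactor_mem_multipliers (α : ℝ) {a : ℂ} (ha : ‖a‖ < 1) :
    (fun z => (z - a) / (1 - conj a * z)) ∈ multipliers α :=
  mem_multipliers_of_hasSum (summable_blaschkeFactorCoeff ha _)
    fun _ hz => hasSum_blaschkeFactorCoeff ha (mem_ball_zero_iff.mp hz)

/-- Every finite Blaschke product is a multiplier of `D_α`, for every `α ∈ ℝ`:
multiplication by `B` maps `D_α` into `D_α` and is bounded on `D_α`. -/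
theorem blaschke_is_multiplier (α : ℝ) (B : ℂ → ℂ) (hB : IsFiniteBlaschke B) :
    ∃ T : Dspace α →L[ℂ] Dspace α, IsMultiplicationBy α B T := by
  obtain ⟨θ, N, a, -, ha, hBz⟩ := hB
  have hfactor : B = (fun _ => Complex.exp (θ * Complex.I)) *
      ∏ i, fun z => (z - a i) / (1 - conj (a i) * z) := by
    funext z
    simp only [hBz, Pi.mul_apply, Finset.prod_apply]
  rw [hfactor]
  exact mul_mem (const_mem_multipliers α _)
    (prod_mem fun i _ => blaschkeFactor_mem_multipliers α (mem_ball_zero_iff.mp (ha i)))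
end
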